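/- arXiv:2004.05442 — 3 statements merged into one kernel-verified Lean document; each statement's English description precedes it below -/
import Mathlib

section
/- Let g, k : (0,∞) → (0,∞) be strictly increasing differentiable functions with k'(x) > 0 for all x > 0. Let p, u > 0 with p ≠ u, let h(x,q) = g(q)/(g(q)+k(x)), and set f(x) = d( h(x,p) | h(x,u) ) for x > 0, where d(q|r) = q·log(q/r) + (1−q)·log((1−q)/(1−r)). Set C = ( g(p)·g(u) − g(p)² − g(p)·g(u)·log(g(u)/g(p)) ) / ( g(p) − g(u) + g(p)·log(g(u)/g(p)) ). Then C > 0, f'(x) > 0 for every x > 0 with k(x) < C, and f'(x) < 0 for every x > 0 with k(x) > C; in particular f is quasi-concave on (0,∞) and attains its maximum exactly at points x* with k(x*) = C. -/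
/-!
Write `a = g p`, `b = g u`, `t = k x`. On `t > 0` the divergence is
`φ t = a log (a/b) / (a + t) + log ((b + t)/(a + t))`, whose derivative is
`(a log (a/b) - (a - b)) (C - t) / ((a + t)² (b + t))`. The inequality `log y < y - 1` makes
the first factor and `C` positive, so `f' = φ'(k x) k'(x)` has the sign of `C - k x`. As `k` is
strictly increasing, `f` increases while `k x < C` and decreases once `k x > C`.
-/

/-- Kullback–Leibler divergence between Bernoulli distributions with means `q` and `r`. -/
noncomputable def klBern (q r : ℝ) : ℝ :=
  q * Real.log (q / r) + (1 - q) * Real.log ((1 - q) / (1 - r))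

open Real Set

lemma mul_log_div_lt_sub {a b : ℝ} (ha : 0 < a) (hb : 0 < b) (hab : a ≠ b) :
    b * log (a / b) < a - b := by
  have hlog := log_lt_sub_one_of_pos (div_pos ha hb) (by rwa [Ne, div_eq_one_iff_eq hb.ne'])
  calc b * log (a / b) < b * (a / b - 1) := mul_lt_mul_of_pos_left hlog hb
    _ = a - b := by field_simp

lemma sub_lt_mul_log_div {a b : ℝ} (ha : 0 < a) (hb : 0 < b) (hab : a ≠ b) :
    a - b < a * log (a / b) := by
  have h := mul_log_div_lt_sub hb ha hab.symm
  rw [← inv_div, log_inv] at h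
  linarith

/-- The threshold `C` of the paper, written as there. -/
noncomputable def klPeak (a b : ℝ) : ℝ :=
  (a * b - a ^ 2 - a * b * log (b / a)) / (a - b + a * log (b / a))

lemma klPeak_eq (a b : ℝ) :
    klPeak a b = a * (a - b - b * log (a / b)) / (a * log (a / b) - (a - b)) := by
  rw [klPeak, ← inv_div a b, log_inv, ← neg_div_neg_eq]
  ring_nf

lemma klPeak_pos {a b : ℝ} (ha : 0 < a) (hb : 0 < b) (hab : a ≠ b) : 0 < klPeak a b := by
  rw [klPeak_eq]
  exact div_pos (mul_pos ha (sub_pos.2 (mul_log_div_lt_sub ha hb hab)))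
    (sub_pos.2 (sub_lt_mul_log_div ha hb hab))

lemma klBern_div_add_div_add {a b t : ℝ} (ha : 0 < a) (hb : 0 < b) (ht : 0 < t) :
    klBern (a / (a + t)) (b / (b + t)) =
      a * log (a / b) / (a + t) + (log (b + t) - log (a + t)) := by
  have hat : 0 < a + t := by linarith
  have hbt : 0 < b + t := by linarith
  have hcompl_a : 1 - a / (a + t) = t / (a + t) := by field_simp; ring
  have hcompl_b : 1 - b / (b + t) = t / (b + t) := by field_simp; ring
  have hlog_mean :
      log (a / (a + t) / (b / (b + t))) = log (a / b) + (log (b + t) - log (a + t)) := by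
    rw [log_div (div_pos ha hat).ne' (div_pos hb hbt).ne', log_div ha.ne' hat.ne',
      log_div hb.ne' hbt.ne', log_div ha.ne' hb.ne']
    ring
  have hlog_compl : log (t / (a + t) / (t / (b + t))) = log (b + t) - log (a + t) := by
    rw [log_div (div_pos ht hat).ne' (div_pos ht hbt).ne', log_div ht.ne' hat.ne',
      log_div ht.ne' hbt.ne']
    ring
  rw [klBern, hcompl_a, hcompl_b, hlog_mean, hlog_compl]
  field_simp
  ring

lemma hasDerivAt_klBern_div_add {a b t : ℝ} (ha : 0 < a) (hb : 0 < b) (hab : a ≠ b)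
    (ht : 0 < t) :
    HasDerivAt (fun s => klBern (a / (a + s)) (b / (b + s)))
      ((a * log (a / b) - (a - b)) * (klPeak a b - t) / ((a + t) ^ 2 * (b + t))) t := by
  have hat : 0 < a + t := by linarith
  have hbt : 0 < b + t := by linarith
  have hD : a * log (a / b) - (a - b) ≠ 0 := (sub_pos.2 (sub_lt_mul_log_div ha hb hab)).ne'
  have hφ : HasDerivAt (fun s => a * log (a / b) * (a + s)⁻¹ + (log (b + s) - log (a + s)))
      (a * log (a / b) * (-1 / (a + t) ^ 2) + (1 / (b + t) - 1 / (a + t))) t :=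
    (((hasDerivAt_id t).const_add a).inv hat.ne' |>.const_mul _).add
      ((((hasDerivAt_id t).const_add b).log hbt.ne').sub
        (((hasDerivAt_id t).const_add a).log hat.ne'))
  have heq : (fun s => klBern (a / (a + s)) (b / (b + s))) =ᶠ[nhds t]
      fun s => a * log (a / b) * (a + s)⁻¹ + (log (b + s) - log (a + s)) := by
    filter_upwards [isOpen_Ioi.mem_nhds ht] with s hs
    rw [klBern_div_add_div_add ha hb hs, div_eq_mul_inv]
  refine (hφ.congr_of_eventuallyEq heq).congr_deriv ?_
  rw [klPeak_eq]
  field_simp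
  ring

lemma hasDerivAt_klBern_div_add_comp {a b x : ℝ} {k : ℝ → ℝ} (ha : 0 < a) (hb : 0 < b)
    (hab : a ≠ b) (hkx : 0 < k x) (hk : DifferentiableAt ℝ k x) :
    HasDerivAt (fun y => klBern (a / (a + k y)) (b / (b + k y)))
      ((a * log (a / b) - (a - b)) * (klPeak a b - k x) / ((a + k x) ^ 2 * (b + k x)) *
        deriv k x) x :=
  (hasDerivAt_klBern_div_add ha hb hab hkx).comp x hk.hasDerivAt

lemma deriv_klBern_div_add_comp_pos {a b x : ℝ} {k : ℝ → ℝ} (ha : 0 < a) (hb : 0 < b)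
    (hab : a ≠ b) (hkx : 0 < k x) (hk' : 0 < deriv k x) (hlt : k x < klPeak a b) :
    0 < deriv (fun y => klBern (a / (a + k y)) (b / (b + k y))) x := by
  rw [(hasDerivAt_klBern_div_add_comp ha hb hab hkx
    (differentiableAt_of_deriv_ne_zero hk'.ne')).deriv]
  have hD := sub_pos.2 (sub_lt_mul_log_div ha hb hab)
  exact mul_pos (div_pos (mul_pos hD (sub_pos.2 hlt)) (by positivity)) hk'

lemma deriv_klBern_div_add_comp_neg {a b x : ℝ} {k : ℝ → ℝ} (ha : 0 < a) (hb : 0 < b)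
    (hab : a ≠ b) (hkx : 0 < k x) (hk' : 0 < deriv k x) (hgt : klPeak a b < k x) :
    deriv (fun y => klBern (a / (a + k y)) (b / (b + k y))) x < 0 := by
  rw [(hasDerivAt_klBern_div_add_comp ha hb hab hkx
    (differentiableAt_of_deriv_ne_zero hk'.ne')).deriv]
  have hD := sub_pos.2 (sub_lt_mul_log_div ha hb hab)
  exact mul_neg_of_neg_of_pos
    (div_neg_of_neg_of_pos (mul_neg_of_pos_of_neg hD (sub_neg.2 hgt)) (by positivity)) hk'

section Unimodal

variable {f k : ℝ → ℝ} {s : Set ℝ} {C : ℝ}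

lemma strictMonoOn_Icc_of_deriv_pos_below (hs : Convex ℝ s) (hf : ContinuousOn f s)
    (hk : StrictMonoOn k s) (hpos : ∀ x ∈ s, k x < C → 0 < deriv f x) {x y : ℝ}
    (hx : x ∈ s) (hy : y ∈ s) (hky : k y ≤ C) : StrictMonoOn f (Icc x y) := by
  have hsub : Icc x y ⊆ s := hs.ordConnected.out hx hy
  refine strictMonoOn_of_deriv_pos (convex_Icc x y) (hf.mono hsub) fun z hz => ?_
  rw [interior_Icc] at hz
  have hz' := hsub (Ioo_subset_Icc_self hz)
  exact hpos z hz' ((hk hz' hy hz.2).trans_le hky)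

lemma strictAntiOn_Icc_of_deriv_neg_above (hs : Convex ℝ s) (hf : ContinuousOn f s)
    (hk : StrictMonoOn k s) (hneg : ∀ x ∈ s, C < k x → deriv f x < 0) {x y : ℝ}
    (hx : x ∈ s) (hy : y ∈ s) (hkx : C ≤ k x) : StrictAntiOn f (Icc x y) := by
  have hsub : Icc x y ⊆ s := hs.ordConnected.out hx hy
  refine strictAntiOn_of_deriv_neg (convex_Icc x y) (hf.mono hsub) fun z hz => ?_
  rw [interior_Icc] at hz
  have hz' := hsub (Ioo_subset_Icc_self hz)
  exact hneg z hz' (hkx.trans_lt (hk hx hz' hz.1))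

lemma min_le_of_deriv_sign (hs : Convex ℝ s) (hf : ContinuousOn f s) (hk : StrictMonoOn k s)
    (hpos : ∀ x ∈ s, k x < C → 0 < deriv f x) (hneg : ∀ x ∈ s, C < k x → deriv f x < 0)
    {x y z : ℝ} (hx : x ∈ s) (hz : z ∈ s) (hxy : x ≤ y) (hyz : y ≤ z) :
    min (f x) (f z) ≤ f y := by
  have hy : y ∈ s := hs.ordConnected.out hx hz ⟨hxy, hyz⟩
  rcases le_total (k y) C with hky | hky
  · exact (min_le_left _ _).trans <| (strictMonoOn_Icc_of_deriv_pos_below hs hf hk hpos hx hy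
      hky).monotoneOn (left_mem_Icc.2 hxy) (right_mem_Icc.2 hxy) hxy
  · exact (min_le_right _ _).trans <| (strictAntiOn_Icc_of_deriv_neg_above hs hf hk hneg hy hz
      hky).antitoneOn (left_mem_Icc.2 hyz) (right_mem_Icc.2 hyz) hyz

lemma isMaxOn_iff_of_deriv_sign (hs : Convex ℝ s) (hs_open : IsOpen s) (hf : ContinuousOn f s)
    (hk : StrictMonoOn k s) (hpos : ∀ x ∈ s, k x < C → 0 < deriv f x)
    (hneg : ∀ x ∈ s, C < k x → deriv f x < 0) {x : ℝ} (hx : x ∈ s) :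
    IsMaxOn f s x ↔ k x = C := by
  constructor
  · intro hmax
    have hcrit := (hmax.isLocalMax (hs_open.mem_nhds hx)).deriv_eq_zero
    rcases lt_trichotomy (k x) C with hlt | heq | hgt
    · exact absurd hcrit (hpos x hx hlt).ne'
    · exact heq
    · exact absurd hcrit (hneg x hx hgt).ne
  · intro hkx y hy
    rcases le_total y x with hyx | hxy
    · exact (strictMonoOn_Icc_of_deriv_pos_below hs hf hk hpos hy hx hkx.le).monotoneOn
        (left_mem_Icc.2 hyx) (right_mem_Icc.2 hyx) hyx
    · exact (strictAntiOn_Icc_of_deriv_neg_above hs hf hk hneg hx hy hkx.ge).antitoneOn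
        (left_mem_Icc.2 hxy) (right_mem_Icc.2 hxy) hxy

end Unimodal

theorem kl_curve_unimodal_general_general
    (g k : ℝ → ℝ)
    (hg_pos : ∀ q > (0:ℝ), 0 < g q) (hk_pos : ∀ x > (0:ℝ), 0 < k x)
    (hg_mono : StrictMonoOn g (Set.Ioi 0))
    (hk' : ∀ x > (0:ℝ), 0 < deriv k x)
    (p u : ℝ) (hp : 0 < p) (hu : 0 < u) (hne : p ≠ u)
    (C : ℝ)
    (hC : C = (g p * g u - g p ^ 2 - g p * g u * Real.log (g u / g p)) /
        (g p - g u + g p * Real.log (g u / g p)))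
    (f : ℝ → ℝ)
    (hf : ∀ x, f x = klBern (g p / (g p + k x)) (g u / (g u + k x))) :
    0 < C ∧
    (∀ x > (0:ℝ), k x < C → 0 < deriv f x) ∧
    (∀ x > (0:ℝ), C < k x → deriv f x < 0) ∧
    (∀ x y z : ℝ, 0 < x → x ≤ y → y ≤ z → min (f x) (f z) ≤ f y) ∧
    (∀ x > (0:ℝ), (IsMaxOn f (Set.Ioi 0) x ↔ k x = C)) := by
  obtain rfl : C = klPeak (g p) (g u) := hC
  obtain rfl : f = fun x => klBern (g p / (g p + k x)) (g u / (g u + k x)) := funext hf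
  have ha := hg_pos p hp
  have hb := hg_pos u hu
  have hab : g p ≠ g u := fun h => hne (hg_mono.injOn hp hu h)
  have hk_diff : ∀ x > (0:ℝ), DifferentiableAt ℝ k x :=
    fun x hx => differentiableAt_of_deriv_ne_zero (hk' x hx).ne'
  have hk_mono : StrictMonoOn k (Ioi 0) :=
    strictMonoOn_of_deriv_pos (convex_Ioi 0)
      (fun x hx => (hk_diff x hx).continuousAt.continuousWithinAt) (by simpa using hk')
  have hcont : ContinuousOn (fun x => klBern (g p / (g p + k x)) (g u / (g u + k x))) (Ioi 0) :=
    fun x hx => (hasDerivAt_klBern_div_add_comp ha hb hab (hk_pos x hx)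
      (hk_diff x hx)).continuousAt.continuousWithinAt
  have hpos := fun x hx hkx ↦
    deriv_klBern_div_add_comp_pos ha hb hab (hk_pos x hx) (hk' x hx) hkx
  have hneg := fun x hx hkx ↦
    deriv_klBern_div_add_comp_neg ha hb hab (hk_pos x hx) (hk' x hx) hkx
  refine ⟨klPeak_pos ha hb hab, hpos, hneg, fun x y z hx hxy hyz => ?_, fun x hx => ?_⟩
  · exact min_le_of_deriv_sign (convex_Ioi 0) hcont hk_mono hpos hneg hx
      (hx.trans_le (hxy.trans hyz)) hxy hyz
  · exact isMaxOn_iff_of_deriv_sign (convex_Ioi 0) isOpen_Ioi hcont hk_mono hpos hneg hx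

/-- Lemma B.5 for the general family h(x,p) = g(p)/(g(p)+k(x)): the KL divergence
curve f(x) = d(h(x,p)|h(x,u)) is unimodal on (0,∞), increasing where k(x) < C and
decreasing where k(x) > C, hence quasi-concave with maximum exactly where k(x) = C. -/
theorem kl_curve_unimodal_general
    (g k : ℝ → ℝ)
    (hg_pos : ∀ q > (0:ℝ), 0 < g q) (hk_pos : ∀ x > (0:ℝ), 0 < k x)
    (hg_mono : StrictMonoOn g (Set.Ioi 0)) (hk_mono : StrictMonoOn k (Set.Ioi 0))
    (hg_diff : ∀ q > (0:ℝ), DifferentiableAt ℝ g q)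
    (hk_diff : ∀ x > (0:ℝ), DifferentiableAt ℝ k x)
    (hk' : ∀ x > (0:ℝ), 0 < deriv k x)
    (p u : ℝ) (hp : 0 < p) (hu : 0 < u) (hne : p ≠ u)
    (C : ℝ)
    (hC : C = (g p * g u - g p ^ 2 - g p * g u * Real.log (g u / g p)) /
        (g p - g u + g p * Real.log (g u / g p)))
    (f : ℝ → ℝ)
    (hf : ∀ x, f x = klBern (g p / (g p + k x)) (g u / (g u + k x))) :
    0 < C ∧
    (∀ x > (0:ℝ), k x < C → 0 < deriv f x) ∧
    (∀ x > (0:ℝ), C < k x → deriv f x < 0) ∧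
    (∀ x y z : ℝ, 0 < x → x ≤ y → y ≤ z → min (f x) (f z) ≤ f y) ∧
    (∀ x > (0:ℝ), (IsMaxOn f (Set.Ioi 0) x ↔ k x = C)) :=
  kl_curve_unimodal_general_general g k hg_pos hk_pos hg_mono hk' p u hp hu hne C hC f hf
end

section
/- For p, u > 0 with p ≠ u define x*(p,u) = ( p·u − p² − p·u·log(u/p) ) / ( p − u + p·log(u/p) ). Then for every fixed u > 0, x*(·,u) is nondecreasing in p: for all 0 < p₁ < p₂ with p₁ ≠ u and p₂ ≠ u, x*(p₁,u) ≤ x*(p₂,u). -/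
/-- The unique maximizer in x of d(p/(p+x) | u/(u+x)) for h(x,p) = p/(p+x). -/
noncomputable def xstar (p u : ℝ) : ℝ :=
  (p * u - p ^ 2 - p * u * Real.log (u / p)) / (p - u + p * Real.log (u / p))

/-!
With `t = u / p`, the `p`-derivative of `x*` has numerator `p² (t - 1) g(t)` where
`g(t) = (t + 1) log t - 2 (t - 1)`. Since `g(1) = 0` and `g'(t) = log t - (1 - 1/t) ≥ 0`, `g` has
the sign of `t - 1`, so `x*` increases on `(0, u)` and on `(u, ∞)`. Across the singularity `p = u`,
`x* - u = (u² - p² - 2pu log t) / (p - u + p log t)`; the denominator is negative because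
`log t < t - 1`, and `u² - p² - 2pu log t = 2pu (sinh (log t) - log t)` has the sign of `u - p`.
Hence `x*(p, u)` lies on the same side of `u` as `p`.
-/

open Real Set

theorem monotoneOn_of_hasDerivAt_nonneg {s : Set ℝ} (hs : Convex ℝ s) (hso : IsOpen s)
    {f f' : ℝ → ℝ} (hf : ∀ x ∈ s, HasDerivAt f (f' x) x) (hf' : ∀ x ∈ s, 0 ≤ f' x) :
    MonotoneOn f s :=
  monotoneOn_of_hasDerivWithinAt_nonneg hs (fun x hx ↦ (hf x hx).continuousAt.continuousWithinAt)
    (by rw [hso.interior_eq]; exact fun x hx ↦ (hf x hx).hasDerivWithinAt)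
    (by rwa [hso.interior_eq])

theorem monotoneOn_add_one_mul_log_sub :
    MonotoneOn (fun t ↦ (t + 1) * log t - 2 * (t - 1)) (Ioi 0) := by
  refine monotoneOn_of_hasDerivAt_nonneg (convex_Ioi 0) isOpen_Ioi
    (f' := fun t ↦ log t - (1 - t⁻¹)) (fun t (ht : 0 < t) ↦ ?_)
    (fun t (ht : 0 < t) ↦ sub_nonneg.2 (one_sub_inv_le_log_of_pos ht))
  have h : HasDerivAt (fun t ↦ (t + 1) * log t - 2 * (t - 1)) _ t :=
    (((hasDerivAt_id' t).add_const 1).mul (hasDerivAt_log ht.ne')).sub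
      (((hasDerivAt_id' t).sub_const 1).const_mul 2)
  refine h.congr_deriv ?_
  field_simp
  ring

theorem sub_one_mul_add_one_mul_log_sub_nonneg {t : ℝ} (ht : 0 < t) :
    0 ≤ (t - 1) * ((t + 1) * log t - 2 * (t - 1)) := by
  rcases le_total t 1 with h | h
  · refine mul_nonneg_of_nonpos_of_nonpos (by linarith) ?_
    simpa using monotoneOn_add_one_mul_log_sub ht (zero_lt_one' ℝ) h
  · refine mul_nonneg (by linarith) ?_
    simpa using monotoneOn_add_one_mul_log_sub (zero_lt_one' ℝ) ht h

theorem sub_add_mul_log_div_neg {p u : ℝ} (hp : 0 < p) (hu : 0 < u) (hpu : p ≠ u) :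
    p - u + p * log (u / p) < 0 := by
  have h := log_lt_sub_one_of_pos (div_pos hu hp)
    (by rwa [ne_eq, div_eq_one_iff_eq hp.ne', eq_comm])
  have : p * log (u / p) < p * (u / p - 1) := mul_lt_mul_of_pos_left h hp
  rw [mul_sub, mul_div_cancel₀ _ hp.ne'] at this
  linarith

theorem xstar_le_of_lt {p u : ℝ} (hp : 0 < p) (hpu : p < u) : xstar p u ≤ u := by
  have hu : 0 < u := hp.trans hpu
  have hlog : 0 ≤ log (u / p) := log_nonneg ((one_le_div hp).2 hpu.le)
  have h := (self_le_sinh_iff.2 hlog).trans_eq (sinh_log (div_pos hu hp))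
  rw [xstar, div_le_iff_of_neg (sub_add_mul_log_div_neg hp hu hpu.ne)]
  have e : 2 * p * u * ((u / p - (u / p)⁻¹) / 2) = u ^ 2 - p ^ 2 := by field_simp
  linarith [mul_le_mul_of_nonneg_left h (by positivity : (0 : ℝ) ≤ 2 * p * u)]

theorem le_xstar_of_lt {p u : ℝ} (hu : 0 < u) (hup : u < p) : u ≤ xstar p u := by
  have hp : 0 < p := hu.trans hup
  have hlog : log (u / p) ≤ 0 := log_nonpos (by positivity) ((div_le_one hp).2 hup.le)
  have h := (sinh_log (div_pos hu hp)).symm.trans_le (sinh_le_self_iff.2 hlog)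
  rw [xstar, le_div_iff_of_neg (sub_add_mul_log_div_neg hp hu hup.ne')]
  have e : 2 * p * u * ((u / p - (u / p)⁻¹) / 2) = u ^ 2 - p ^ 2 := by field_simp
  linarith [mul_le_mul_of_nonneg_left h (by positivity : (0 : ℝ) ≤ 2 * p * u)]

theorem hasDerivAt_xstar {p u : ℝ} (hp : 0 < p) (hu : 0 < u) (hpu : p ≠ u) :
    HasDerivAt (fun q ↦ xstar q u)
      ((p - u) * (2 * (u - p) - (p + u) * log (u / p)) / (p - u + p * log (u / p)) ^ 2) p := by
  have hL : HasDerivAt (fun q ↦ log (u / q)) _ p :=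
    ((hasDerivAt_const p u).fun_div (hasDerivAt_id' p) hp.ne').log (by positivity)
  have hN : HasDerivAt (fun q ↦ q * u - q ^ 2 - q * u * log (u / q)) _ p :=
    (((hasDerivAt_id' p).mul_const u).sub (hasDerivAt_pow 2 p)).sub
      (((hasDerivAt_id' p).mul_const u).mul hL)
  have hD : HasDerivAt (fun q ↦ q - u + q * log (u / q)) _ p :=
    ((hasDerivAt_id' p).sub_const u).add ((hasDerivAt_id' p).mul hL)
  have h : HasDerivAt (fun q ↦ xstar q u) _ p :=
    hN.fun_div hD (sub_add_mul_log_div_neg hp hu hpu).ne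
  refine h.congr_deriv ?_
  field_simp
  ring

theorem monotoneOn_xstar {u : ℝ} (hu : 0 < u) {s : Set ℝ} (hs : Convex ℝ s) (hso : IsOpen s)
    (hs₀ : s ⊆ Ioi 0) (hsu : u ∉ s) : MonotoneOn (fun p ↦ xstar p u) s := by
  refine monotoneOn_of_hasDerivAt_nonneg hs hso
    (fun p hp ↦ hasDerivAt_xstar (hs₀ hp) hu (ne_of_mem_of_not_mem hp hsu)) fun p hp ↦ ?_
  have hp : 0 < p := hs₀ hp
  have e : (p - u) * (2 * (u - p) - (p + u) * log (u / p)) =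
      p ^ 2 * ((u / p - 1) * ((u / p + 1) * log (u / p) - 2 * (u / p - 1))) := by
    field_simp
    ring
  rw [e]
  exact div_nonneg
    (mul_nonneg (sq_nonneg p) (sub_one_mul_add_one_mul_log_sub_nonneg (div_pos hu hp)))
    (sq_nonneg _)

/-- Lemma B.5: x*(p,u) is nondecreasing in p for fixed u. -/
theorem xstar_mono_in_p (u : ℝ) (hu : 0 < u) :
    ∀ p₁ p₂ : ℝ, 0 < p₁ → p₁ < p₂ → p₁ ≠ u → p₂ ≠ u →
      xstar p₁ u ≤ xstar p₂ u := by
  intro p₁ p₂ hp₁ h₁₂ hp₁u hp₂u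
  rcases hp₁u.lt_or_gt with hp₁u | hup₁
  · rcases hp₂u.lt_or_gt with hp₂u | hup₂
    · exact monotoneOn_xstar hu (convex_Ioo 0 u) isOpen_Ioo Ioo_subset_Ioi_self
        (fun h ↦ h.2.false) ⟨hp₁, hp₁u⟩ ⟨hp₁.trans h₁₂, hp₂u⟩ h₁₂.le
    · exact (xstar_le_of_lt hp₁ hp₁u).trans (le_xstar_of_lt hu hup₂)
  · exact monotoneOn_xstar hu (convex_Ioi u) isOpen_Ioi (Ioi_subset_Ioi hu.le) (lt_irrefl u)
      hup₁ (hup₁.trans h₁₂) h₁₂.le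
end

section
/- For p, u > 0 with p ≠ u define x*(p,u) = ( p·u − p² − p·u·log(u/p) ) / ( p − u + p·log(u/p) ). Then for every fixed p > 0, x*(p,·) is nondecreasing in u: for all 0 < u₁ < u₂ with u₁ ≠ p and u₂ ≠ p, x*(p,u₁) ≤ x*(p,u₂). -/
/-! By homogeneity, `xstar p u = p * g (u / p)` with `g t = (t - 1 - t log t) / (1 - t + log t)`.
Its derivative `((t - 1)² - t (log t)²) / (t (1 - t + log t)²)` is nonnegative, so `g` increases
on `(0, 1)` and on `(1, ∞)`. At the removable singularity `t = 1` (where Lean's `g 1` is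
`0 / 0 = 0`) the limit is `1`, and the sign of `(1 + t) log t - 2 (t - 1)`, increasing and zero
at `1`, puts `g` below `1` on `(0, 1)` and above `1` on `(1, ∞)`, which joins the two branches. -/

open Real Set

lemma monotoneOn_of_hasDerivAt_nonneg_of_isOpen {f f' : ℝ → ℝ} {D : Set ℝ}
    (hD : Convex ℝ D) (hDo : IsOpen D) (hf : ∀ x ∈ D, HasDerivAt f (f' x) x)
    (hf' : ∀ x ∈ D, 0 ≤ f' x) :
    MonotoneOn f D := by
  refine monotoneOn_of_hasDerivWithinAt_nonneg hD
    (fun x hx ↦ (hf x hx).continuousAt.continuousWithinAt) (fun x hx ↦ ?_)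
    (by rwa [hDo.interior_eq])
  rw [hDo.interior_eq] at hx ⊢
  exact (hf x hx).hasDerivWithinAt

/-- With `t = exp (2y)` this is `|y| ≤ |sinh y|`. -/
lemma mul_log_sq_le_sub_one_sq {t : ℝ} (ht : 0 < t) : t * log t ^ 2 ≤ (t - 1) ^ 2 := by
  set y := log t / 2
  have hexp : exp y ^ 2 = t := by
    rw [← exp_nat_mul, Nat.cast_ofNat, mul_div_cancel₀ _ two_ne_zero, exp_log ht]
  have hsub : t - 1 = 2 * exp y * sinh y := by
    rw [sinh_eq, exp_neg, ← hexp]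
    field_simp
  have hy : |y| ≤ |sinh y| := by
    rw [abs_sinh]
    exact self_le_sinh_iff.mpr (abs_nonneg y)
  calc t * log t ^ 2 = 4 * t * y ^ 2 := by ring
    _ ≤ 4 * t * sinh y ^ 2 := mul_le_mul_of_nonneg_left (sq_le_sq.mpr hy) (by positivity)
    _ = (t - 1) ^ 2 := by rw [hsub, ← hexp]; ring

lemma monotoneOn_one_add_mul_log_sub :
    MonotoneOn (fun t ↦ (1 + t) * log t - 2 * (t - 1)) (Ioi 0) := by
  refine monotoneOn_of_hasDerivAt_nonneg_of_isOpen (convex_Ioi 0) isOpen_Ioi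
    (f' := fun t ↦ log t + t⁻¹ - 1) (fun t (ht : 0 < t) ↦ ?_) (fun t (ht : 0 < t) ↦ ?_)
  · refine (((hasDerivAt_id' t).const_add 1).mul (hasDerivAt_log ht.ne')).sub
      (((hasDerivAt_id' t).sub_const 1).const_mul 2) |>.congr_deriv ?_
    field_simp
    ring
  · have := log_le_sub_one_of_pos (inv_pos.mpr ht)
    rw [log_inv] at this
    linarith

lemma one_add_mul_log_le_two_mul_sub_one {t : ℝ} (h0 : 0 < t) (h1 : t ≤ 1) :
    (1 + t) * log t ≤ 2 * (t - 1) := by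
  have := monotoneOn_one_add_mul_log_sub h0 (mem_Ioi.2 one_pos) h1
  simp only [log_one, mul_zero, sub_self] at this
  linarith

lemma two_mul_sub_one_le_one_add_mul_log {t : ℝ} (h1 : 1 ≤ t) :
    2 * (t - 1) ≤ (1 + t) * log t := by
  have := monotoneOn_one_add_mul_log_sub (mem_Ioi.2 one_pos)
    (mem_Ioi.2 (one_pos.trans_le h1)) h1
  simp only [log_one, mul_zero, sub_self] at this
  linarith

lemma one_sub_add_log_neg {t : ℝ} (ht : 0 < t) (ht1 : t ≠ 1) : 1 - t + log t < 0 := by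
  linarith [log_lt_sub_one_of_pos ht ht1]

lemma xstar_mul_mul (c p u : ℝ) : xstar (c * p) (c * u) = c * xstar p u := by
  rcases eq_or_ne c 0 with rfl | hc
  · simp [xstar]
  rw [xstar, xstar, mul_div_mul_left _ _ hc,
    show c * p * (c * u) - (c * p) ^ 2 - c * p * (c * u) * log (u / p)
      = c * (c * (p * u - p ^ 2 - p * u * log (u / p))) by ring,
    show c * p - c * u + c * p * log (u / p) = c * (p - u + p * log (u / p)) by ring,
    mul_div_mul_left _ _ hc, mul_div_assoc]

lemma xstar_eq_mul_xstar_one {p : ℝ} (hp : p ≠ 0) (u : ℝ) :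
    xstar p u = p * xstar 1 (u / p) := by
  rw [← xstar_mul_mul, mul_one, mul_div_cancel₀ _ hp]

lemma xstar_one_left (t : ℝ) : xstar 1 t = (t - 1 - t * log t) / (1 - t + log t) := by
  simp [xstar]

lemma hasDerivAt_xstar_one {t : ℝ} (ht : 0 < t) (ht1 : t ≠ 1) :
    HasDerivAt (xstar 1) (((t - 1) ^ 2 - t * log t ^ 2) / (t * (1 - t + log t) ^ 2)) t := by
  have hN : HasDerivAt (fun t ↦ t - 1 - t * log t) (-log t) t :=
    (((hasDerivAt_id' t).sub_const 1).sub (hasDerivAt_mul_log ht.ne')).congr_deriv (by ring)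
  have hD : HasDerivAt (fun t ↦ 1 - t + log t) (-1 + t⁻¹) t :=
    (((hasDerivAt_id' t).const_sub 1).add (hasDerivAt_log ht.ne')).congr_deriv (by ring)
  rw [show xstar 1 = _ from funext xstar_one_left]
  refine (hN.div hD (one_sub_add_log_neg ht ht1).ne).congr_deriv ?_
  field_simp
  ring

lemma monotoneOn_xstar_one {D : Set ℝ} (hD : Convex ℝ D) (hDo : IsOpen D)
    (hDsub : D ⊆ Ioi 0 \ {1}) : MonotoneOn (xstar 1) D :=
  monotoneOn_of_hasDerivAt_nonneg_of_isOpen hD hDo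
    (fun _ ht ↦ hasDerivAt_xstar_one (hDsub ht).1 (hDsub ht).2)
    (fun _ ht ↦ div_nonneg (sub_nonneg.mpr (mul_log_sq_le_sub_one_sq (hDsub ht).1))
      (mul_nonneg (hDsub ht).1.le (sq_nonneg _)))

lemma xstar_one_le_one {t : ℝ} (h0 : 0 < t) (h1 : t < 1) : xstar 1 t ≤ 1 := by
  rw [xstar_one_left, div_le_one_of_neg (one_sub_add_log_neg h0 h1.ne)]
  linarith [one_add_mul_log_le_two_mul_sub_one h0 h1.le]

lemma one_le_xstar_one {t : ℝ} (h1 : 1 < t) : 1 ≤ xstar 1 t := by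
  rw [xstar_one_left, one_le_div_of_neg (one_sub_add_log_neg (one_pos.trans h1) h1.ne')]
  linarith [two_mul_sub_one_le_one_add_mul_log h1.le]

lemma xstar_one_le_xstar_one {t₁ t₂ : ℝ} (h0 : 0 < t₁) (h12 : t₁ ≤ t₂) (h1 : t₁ ≠ 1)
    (h2 : t₂ ≠ 1) : xstar 1 t₁ ≤ xstar 1 t₂ := by
  rcases h1.lt_or_gt with h1 | h1
  · rcases h2.lt_or_gt with h2 | h2
    · exact monotoneOn_xstar_one (convex_Ioo 0 1) isOpen_Ioo
        (fun t ht ↦ ⟨ht.1, ht.2.ne⟩) ⟨h0, h1⟩ ⟨h0.trans_le h12, h2⟩ h12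
    · exact (xstar_one_le_one h0 h1).trans (one_le_xstar_one h2)
  · exact monotoneOn_xstar_one (convex_Ioi 1) isOpen_Ioi
      (fun t (ht : 1 < t) ↦ ⟨one_pos.trans ht, ht.ne'⟩) h1 (h1.trans_le h12) h12

/-- Lemma B.5: x*(p,u) is nondecreasing in u for fixed p. -/
theorem xstar_mono_in_u (p : ℝ) (hp : 0 < p) :
    ∀ u₁ u₂ : ℝ, 0 < u₁ → u₁ < u₂ → u₁ ≠ p → u₂ ≠ p →
      xstar p u₁ ≤ xstar p u₂ := by
  intro u₁ u₂ hu₁ h12 h₁ h₂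
  rw [xstar_eq_mul_xstar_one hp.ne', xstar_eq_mul_xstar_one hp.ne']
  gcongr
  refine xstar_one_le_xstar_one (by positivity) (by gcongr) ?_ ?_
  · rwa [Ne, div_eq_one_iff_eq hp.ne']
  · rwa [Ne, div_eq_one_iff_eq hp.ne']
end
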